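/- Fix a natural number d ≥ 1 and let (h_n) be a sequence of natural numbers with h_n / ln n → 0 as n → ∞. For each n, sample the random graph of the model G(n, d) and fix the node v = 0 ∈ Fin n. Then the probability that the out-neighborhood of v up to distance h_n is a tree — i.e., that there do not exist two distinct directed paths of length at most h_n starting at v and ending at the same node — tends to 1 as n → ∞. -/

import Mathlib

open MeasureTheory

instance (n : ℕ) : MeasurableSpace (Finset (Fin n)) := ⊤

/-- The uniform probability measure on a finite set `s`. -/
noncomputable def uniformFinset {α : Type*} [MeasurableSpace α] (s : Finset α) :
    Measure α :=
  (s.card : ENNReal)⁻¹ • ∑ x ∈ s, Measure.dirac x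

/-- The law of the random graph of the model `G(n,d)`: independently for each
node of `Fin n`, its set of successors is a uniformly random `d`-element subset
of `Fin n`. -/
noncomputable def graphMeasure (n d : ℕ) : Measure (Fin n → Finset (Fin n)) :=
  Measure.pi fun _ : Fin n => uniformFinset (Finset.powersetCard d Finset.univ)

/-- The out-neighborhood of `v` up to distance `h` is a tree: there do not exist
two distinct directed paths of length at most `h` starting at `v` and ending at
the same node. Equivalently, any two directed paths of length at most `h` from
`v` with the same endpoint coincide (same length and same sequence of nodes). -/
def TreeUpTo {V : Type*} (E : V → V → Prop) (v : V) (h : ℕ) : Prop :=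
  ∀ (k₁ k₂ : ℕ) (w₁ w₂ : ℕ → V), k₁ ≤ h → k₂ ≤ h →
    w₁ 0 = v → w₂ 0 = v →
    (∀ j < k₁, E (w₁ j) (w₁ (j + 1))) → (∀ j < k₂, E (w₂ j) (w₂ (j + 1))) →
    w₁ k₁ = w₂ k₂ → (k₁ = k₂ ∧ ∀ j ≤ k₁, w₁ j = w₂ j)

/-!
Suppose the depth-`h` out-neighbourhood of `v` is not a tree, and let `m + 1 ≤ h` be the least
depth at which it fails, witnessed by two walks from `v` with a common end. Up to depth `m` the
neighbourhood is still a tree, so each walk is injective before its end, and after the walks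
diverge they meet only at that end. The first walk together with the second one past the point
of divergence is a pattern with `n + 1` distinct edges but only `n` vertices besides `v`, where
`n < 2h`. Once the vertices are fixed, the `n + 1` edges are present with probability at most
`(d / N) ^ (n + 1)`: successor sets of distinct vertices are independent, and a uniform
`d`-subset of `Fin N` contains a fixed `q`-set with probability at most `(d / N) ^ q`. Summing
over the `N ^ n` choices of vertices and at most `(2h) ^ 3` shapes gives
`P(not a tree) ≤ (2h) ^ 3 d ^ (2h) / N`, which tends to `0` when `h = o(log N)`.
-/

open Finset Filter Topology
open scoped ENNReal

section Combinatorics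

variable {V : Type*} {E : V → V → Prop} {v : V}

def IsWalkFrom (E : V → V → Prop) (v : V) (k : ℕ) (w : ℕ → V) : Prop :=
  w 0 = v ∧ ∀ j < k, E (w j) (w (j + 1))

lemma IsWalkFrom.mono {k k' : ℕ} {w : ℕ → V} (hw : IsWalkFrom E v k w) (hk : k' ≤ k) :
    IsWalkFrom E v k' w :=
  ⟨hw.1, fun j hj => hw.2 j (by omega)⟩

lemma treeUpTo_iff {h : ℕ} : TreeUpTo E v h ↔ ∀ k₁ k₂ w₁ w₂, k₁ ≤ h → k₂ ≤ h →
    IsWalkFrom E v k₁ w₁ → IsWalkFrom E v k₂ w₂ → w₁ k₁ = w₂ k₂ →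
      k₁ = k₂ ∧ ∀ j ≤ k₁, w₁ j = w₂ j :=
  ⟨fun hT k₁ k₂ w₁ w₂ hk₁ hk₂ hw₁ hw₂ => hT k₁ k₂ w₁ w₂ hk₁ hk₂ hw₁.1 hw₂.1 hw₁.2 hw₂.2,
    fun hT k₁ k₂ w₁ w₂ hk₁ hk₂ h₁ h₂ hp₁ hp₂ => hT k₁ k₂ w₁ w₂ hk₁ hk₂ ⟨h₁, hp₁⟩ ⟨h₂, hp₂⟩⟩

lemma treeUpTo_zero : TreeUpTo E v 0 := by
  intro k₁ k₂ w₁ w₂ hk₁ hk₂ h₁ h₂ _ _ _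
  obtain rfl : k₁ = 0 := by omega
  obtain rfl : k₂ = 0 := by omega
  refine ⟨rfl, fun j hj => ?_⟩
  obtain rfl : j = 0 := by omega
  rw [h₁, h₂]

lemma exists_treeUpTo_not_treeUpTo_succ {h : ℕ} (hh : ¬ TreeUpTo E v h) :
    ∃ m < h, TreeUpTo E v m ∧ ¬ TreeUpTo E v (m + 1) := by
  induction h with
  | zero => exact absurd treeUpTo_zero hh
  | succ h ih =>
    by_cases hT : TreeUpTo E v h
    · exact ⟨h, h.lt_succ_self, hT, hh⟩
    · obtain ⟨m, hm, hmT⟩ := ih hT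
      exact ⟨m, by omega, hmT⟩

lemma TreeUpTo.eq_of_apply_eq {m k k' i j : ℕ} {w w' : ℕ → V} (hT : TreeUpTo E v m)
    (hw : IsWalkFrom E v k w) (hw' : IsWalkFrom E v k' w') (hk : k ≤ m + 1) (hk' : k' ≤ m + 1)
    (hi : i < k) (hj : j < k') (h : w i = w' j) : i = j ∧ ∀ l ≤ i, w l = w' l :=
  treeUpTo_iff.mp hT i j w w' (by omega) (by omega) (hw.mono hi.le) (hw'.mono hj.le) h

lemma exists_commonPrefix (w₁ w₂ : ℕ → V) (h₀ : w₁ 0 = w₂ 0) (K : ℕ) :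
    ∃ t ≤ K, (∀ l ≤ t, w₁ l = w₂ l) ∧ (t < K → w₁ (t + 1) ≠ w₂ (t + 1)) := by
  induction K with
  | zero => exact ⟨0, le_rfl, fun l hl => by rwa [Nat.le_zero.mp hl], by omega⟩
  | succ K ih =>
    obtain ⟨t, htK, hpre, hdiv⟩ := ih
    by_cases hlt : t < K
    · exact ⟨t, by omega, hpre, fun _ => hdiv hlt⟩
    obtain rfl : t = K := by omega
    by_cases hnext : w₁ (t + 1) = w₂ (t + 1)
    · refine ⟨t + 1, le_rfl, fun l hl => ?_, by omega⟩
      rcases Nat.lt_or_eq_of_le hl with hl | rfl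
      exacts [hpre l (by omega), hnext]
    · exact ⟨t, by omega, hpre, fun _ => hnext⟩

/-- An occurrence at `v` of the rooted pattern on the vertex slots `Fin (n + 1)` (root `0`)
whose `j`-th edge runs from slot `src j` to slot `tgt j`: distinct slots may share a vertex,
but distinct edges of the pattern must be distinct edges of `E`. -/
def ContainsPattern (E : V → V → Prop) (v : V) {n : ℕ} (src tgt : Fin (n + 1) → Fin (n + 1)) :
    Prop :=
  ∃ x : Fin (n + 1) → V, x 0 = v ∧ Function.Injective (fun j => (x (src j), x (tgt j))) ∧
    ∀ j, E (x (src j)) (x (tgt j))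

/-- The pattern made of the path `0 → 1 → ⋯ → k` and the path `t → k + 1 → ⋯ → n → k`:
edge `j` leaves slot `j` (slot `t` if `j = k`) and enters slot `j + 1` (slot `k` if `j = n`). -/
def branchSrc {n : ℕ} (k t : Fin (n + 1)) (j : Fin (n + 1)) : Fin (n + 1) :=
  if j = k then t else j

def branchTgt {n : ℕ} (k : Fin (n + 1)) (j : Fin (n + 1)) : Fin (n + 1) :=
  if j = Fin.last n then k else j + 1

def branchEdge (w₁ w₂ : ℕ → V) (k₁ t j : ℕ) : V × V :=
  if j < k₁ then (w₁ j, w₁ (j + 1)) else (w₂ (j - k₁ + t), w₂ (j - k₁ + t + 1))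

def branchSlot (w₁ w₂ : ℕ → V) (k₁ t i : ℕ) : V :=
  if i ≤ k₁ then w₁ i else w₂ (i - k₁ + t)

lemma branchEdge_adj {k₁ k₂ t j : ℕ} {w₁ w₂ : ℕ → V} (hw₁ : IsWalkFrom E v k₁ w₁)
    (hw₂ : IsWalkFrom E v k₂ w₂) (hj : j < k₁ + (k₂ - t)) :
    E (branchEdge w₁ w₂ k₁ t j).1 (branchEdge w₁ w₂ k₁ t j).2 := by
  unfold branchEdge
  split_ifs with hjk
  exacts [hw₁.2 j hjk, hw₂.2 _ (by omega)]

lemma TreeUpTo.injOn_branchEdge {m k₁ k₂ t : ℕ} {w₁ w₂ : ℕ → V} (hT : TreeUpTo E v m)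
    (hw₁ : IsWalkFrom E v k₁ w₁) (hw₂ : IsWalkFrom E v k₂ w₂) (hk₁ : k₁ ≤ m + 1)
    (hk₂ : k₂ ≤ m + 1) (hdiv : t < k₁ → w₁ (t + 1) ≠ w₂ (t + 1)) :
    Set.InjOn (branchEdge w₁ w₂ k₁ t) (Set.Iio (k₁ + (k₂ - t))) := by
  have hcross : ∀ i j, i < k₁ → t ≤ j → j < k₂ → (w₁ i, w₁ (i + 1)) ≠ (w₂ j, w₂ (j + 1)) := by
    intro i j hi htj hj h
    obtain ⟨rfl, hagree⟩ := hT.eq_of_apply_eq hw₁ hw₂ hk₁ hk₂ hi hj (Prod.mk.inj h).1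
    apply hdiv (by omega)
    rcases Nat.lt_or_eq_of_le htj with hlt | rfl
    exacts [hagree (t + 1) hlt, (Prod.mk.inj h).2]
  intro i hi j hj h
  simp only [Set.mem_Iio] at hi hj
  simp only [branchEdge] at h
  split_ifs at h with hik hjk hjk
  · exact (hT.eq_of_apply_eq hw₁ hw₁ hk₁ hk₁ hik hjk (Prod.mk.inj h).1).1
  · exact absurd h (hcross _ _ hik (by omega) (by omega))
  · exact absurd h.symm (hcross _ _ hjk (by omega) (by omega))
  · have := (hT.eq_of_apply_eq hw₂ hw₂ hk₂ hk₂ (by omega) (by omega) (Prod.mk.inj h).1).1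
    omega

section BranchSlots

variable {n : ℕ} {k t : Fin (n + 1)} {w₁ w₂ : ℕ → V}

lemma branchSlot_branchSrc (htk : t ≤ k) (hpre : w₁ t = w₂ t) (j : Fin (n + 1)) :
    branchSlot w₁ w₂ k t (branchSrc k t j) = (branchEdge w₁ w₂ k t j).1 := by
  simp only [branchSrc, branchSlot, branchEdge, Fin.ext_iff]
  split_ifs with h₁ <;> first | omega | rfl | rw [hpre, h₁, Nat.sub_self, zero_add]

lemma branchSlot_branchTgt (hend : w₁ k = w₂ (n - k + t + 1)) (j : Fin (n + 1)) :
    branchSlot w₁ w₂ k t (branchTgt k j) = (branchEdge w₁ w₂ k t j).2 := by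
  by_cases hj : j = Fin.last n
  · subst hj
    simp [branchTgt, branchSlot, branchEdge, hend, not_lt.mpr k.is_le]
  · have hj₁ : ((j + 1 : Fin (n + 1)) : ℕ) = j + 1 :=
      Fin.val_add_one_of_lt (Fin.lt_last_iff_ne_last.2 hj)
    simp only [branchTgt, if_neg hj, branchSlot, branchEdge, hj₁]
    split_ifs <;> first | rfl | omega | (congr 1; omega)

end BranchSlots

lemma exists_containsPattern_branch {m k₁ k₂ t : ℕ} {w₁ w₂ : ℕ → V} (hT : TreeUpTo E v m)
    (hw₁ : IsWalkFrom E v k₁ w₁) (hw₂ : IsWalkFrom E v k₂ w₂) (hk₁ : k₁ ≤ m + 1)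
    (hk₂ : k₂ ≤ m + 1) (hend : w₁ k₁ = w₂ k₂) (htk₁ : t ≤ k₁) (htk₂ : t < k₂)
    (hpre : w₁ t = w₂ t) (hdiv : t < k₁ → w₁ (t + 1) ≠ w₂ (t + 1)) :
    ∃ n < k₁ + k₂, ∃ k t : Fin (n + 1), ContainsPattern E v (branchSrc k t) (branchTgt k) := by
  set n := k₁ + (k₂ - t) - 1 with hn
  let kₙ : Fin (n + 1) := ⟨k₁, by omega⟩
  let tₙ : Fin (n + 1) := ⟨t, by omega⟩
  let x : Fin (n + 1) → V := fun i => branchSlot w₁ w₂ k₁ t i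
  have hend' : w₁ k₁ = w₂ (n - k₁ + t + 1) := hend.trans (congrArg w₂ (by omega))
  have hedge : ∀ j, (x (branchSrc kₙ tₙ j), x (branchTgt kₙ j)) = branchEdge w₁ w₂ k₁ t j :=
    fun j => Prod.ext (branchSlot_branchSrc (k := kₙ) (t := tₙ) htk₁ hpre j)
      (branchSlot_branchTgt (k := kₙ) (t := tₙ) hend' j)
  refine ⟨n, by omega, kₙ, tₙ, x, by simpa [x, branchSlot] using hw₁.1, fun i j h => ?_,
    fun j => ?_⟩
  · simp only [hedge] at h
    exact Fin.ext (hT.injOn_branchEdge hw₁ hw₂ hk₁ hk₂ hdiv (Set.mem_Iio.2 (by omega))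
      (Set.mem_Iio.2 (by omega)) h)
  · simpa only [← hedge] using branchEdge_adj (t := t) hw₁ hw₂ (j := j) (by omega)

theorem exists_containsPattern_of_not_treeUpTo {h : ℕ} (hh : ¬ TreeUpTo E v h) :
    ∃ n < 2 * h, ∃ k t : Fin (n + 1), ContainsPattern E v (branchSrc k t) (branchTgt k) := by
  obtain ⟨m, hmh, hT, hT'⟩ := exists_treeUpTo_not_treeUpTo_succ hh
  simp only [treeUpTo_iff, not_forall] at hT'
  obtain ⟨k₁, k₂, w₁, w₂, hk₁, hk₂, hw₁, hw₂, hend, hne⟩ := hT'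
  obtain ⟨t, htk, hpre, hdiv⟩ :=
    exists_commonPrefix w₁ w₂ (hw₁.1.trans hw₂.1.symm) (min k₁ k₂)
  suffices ∃ n < k₁ + k₂, ∃ k t : Fin (n + 1),
      ContainsPattern E v (branchSrc k t) (branchTgt k) by
    obtain ⟨n, hn, hpattern⟩ := this
    exact ⟨n, by omega, hpattern⟩
  by_cases htk₂ : t < k₂
  · exact exists_containsPattern_branch hT hw₁ hw₂ hk₁ hk₂ hend (by omega) htk₂
      (hpre t le_rfl) fun _ => hdiv (by omega)
  by_cases htk₁ : t < k₁
  · rw [add_comm]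
    exact exists_containsPattern_branch hT hw₂ hw₁ hk₂ hk₁ hend.symm (by omega) htk₁
      (hpre t le_rfl).symm fun htk₂' => absurd htk₂' htk₂
  exact absurd ⟨by omega, fun j hj => hpre j (by omega)⟩ hne

end Combinatorics

namespace Nat

lemma descFactorial_mul_pow_le {d N : ℕ} (hdN : d ≤ N) (q : ℕ) :
    d.descFactorial q * N ^ q ≤ d ^ q * N.descFactorial q := by
  induction q with
  | zero => simp
  | succ q ih =>
    have hstep : (d - q) * N ≤ d * (N - q) := by
      rw [Nat.sub_mul, Nat.mul_sub]
      exact Nat.sub_le_sub_left (by rw [mul_comm q N]; exact Nat.mul_le_mul_right q hdN) _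
    calc d.descFactorial (q + 1) * N ^ (q + 1)
        = ((d - q) * N) * (d.descFactorial q * N ^ q) := by
          rw [descFactorial_succ, pow_succ]; ring
      _ ≤ (d * (N - q)) * (d ^ q * N.descFactorial q) := Nat.mul_le_mul hstep ih
      _ = d ^ (q + 1) * N.descFactorial (q + 1) := by rw [descFactorial_succ, pow_succ]; ring

lemma choose_mul_pow_le {d N : ℕ} (hdN : d ≤ N) (q : ℕ) :
    d.choose q * N ^ q ≤ d ^ q * N.choose q := by
  have := descFactorial_mul_pow_le hdN q
  rw [descFactorial_eq_factorial_mul_choose, descFactorial_eq_factorial_mul_choose] at this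
  refine Nat.le_of_mul_le_mul_left ?_ q.factorial_pos
  linarith

lemma choose_sub_mul_pow_le {d N q : ℕ} (hqd : q ≤ d) (hdN : d ≤ N) :
    (N - q).choose (d - q) * N ^ q ≤ d ^ q * N.choose d := by
  refine Nat.le_of_mul_le_mul_right ?_ (choose_pos (hqd.trans hdN))
  calc (N - q).choose (d - q) * N ^ q * N.choose q
      = N.choose q * (N - q).choose (d - q) * N ^ q := by ring
    _ = N.choose d * (d.choose q * N ^ q) := by rw [← choose_mul hqd]; ring
    _ ≤ N.choose d * (d ^ q * N.choose q) := Nat.mul_le_mul_left _ (choose_mul_pow_le hdN q)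
    _ = d ^ q * N.choose d * N.choose q := by ring

end Nat

lemma ENNReal.natCast_div_le_natCast_div {a b c e : ℕ} (hb : b ≠ 0) (he : e ≠ 0)
    (h : a * e ≤ c * b) : (a : ℝ≥0∞) / b ≤ c / e := by
  rw [ENNReal.div_le_iff (by exact_mod_cast hb) (by simp), ← ENNReal.mul_div_right_comm,
    ENNReal.le_div_iff_mul_le (by simp [he]) (by simp)]
  exact_mod_cast h

section UniformFinset

variable {α : Type*} [MeasurableSpace α]

lemma uniformFinset_apply (s : Finset α) {t : Set α} (ht : MeasurableSet t)
    [DecidablePred (· ∈ t)] : uniformFinset s t = #(s.filter (· ∈ t)) / #s := by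
  simp [uniformFinset, Measure.dirac_apply' _ ht, Set.indicator_apply, sum_boole,
    ENNReal.div_eq_inv_mul]

lemma isProbabilityMeasure_uniformFinset {s : Finset α} (hs : s.Nonempty) :
    IsProbabilityMeasure (uniformFinset s) := by
  classical
  constructor
  rw [uniformFinset_apply s MeasurableSet.univ, filter_true_of_mem fun _ _ => Set.mem_univ _,
    ENNReal.div_self (by simpa using hs.card_pos.ne') (by simp)]

end UniformFinset

lemma isProbabilityMeasure_uniformFinset_powersetCard {N d : ℕ} (hdN : d ≤ N) :
    IsProbabilityMeasure (uniformFinset (powersetCard d (univ : Finset (Fin N)))) :=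
  isProbabilityMeasure_uniformFinset (powersetCard_nonempty.mpr (by simpa using hdN))

lemma uniformFinset_superset_le {N d : ℕ} (hdN : d ≤ N) (Q : Finset (Fin N)) :
    uniformFinset (powersetCard d univ) {A | Q ⊆ A} ≤ ((d : ℝ≥0∞) / N) ^ #Q := by
  classical
  rw [uniformFinset_apply _ MeasurableSet.of_discrete, card_powersetCard, card_univ,
    Fintype.card_fin, div_eq_mul_inv _ (N : ℝ≥0∞), mul_pow, ← ENNReal.inv_pow,
    ← div_eq_mul_inv]
  simp only [Set.mem_ofPred_eq]
  rcases le_or_gt #Q d with hQd | hdQ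
  · rw [card_filter_powersetCard_subset Q univ d (subset_univ Q) hQd, card_univ,
      Fintype.card_fin]
    have hpow : N ^ #Q ≠ 0 := by
      rcases Q.eq_empty_or_nonempty with rfl | ⟨x, -⟩
      · simp
      · exact pow_ne_zero _ x.pos.ne'
    exact_mod_cast ENNReal.natCast_div_le_natCast_div (Nat.choose_pos hdN).ne' hpow
      (Nat.choose_sub_mul_pow_le hQd hdN)
  · rw [filter_false_of_mem fun A hA hQA => ?_]
    · simp
    · exact hdQ.not_ge ((mem_powersetCard.mp hA).2 ▸ card_le_card hQA)

section GraphMeasure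

variable {N d : ℕ}

lemma isProbabilityMeasure_graphMeasure (hdN : d ≤ N) :
    IsProbabilityMeasure (graphMeasure N d) := by
  have := isProbabilityMeasure_uniformFinset_powersetCard hdN
  unfold graphMeasure
  infer_instance

lemma graphMeasure_setOf_eq_one_sub (hdN : d ≤ N) (p : (Fin N → Finset (Fin N)) → Prop) :
    graphMeasure N d {g | p g} = 1 - graphMeasure N d {g | ¬ p g} := by
  have := isProbabilityMeasure_graphMeasure hdN
  rw [← prob_compl_eq_one_sub MeasurableSet.of_discrete]
  congr 1
  ext
  simp

lemma graphMeasure_edges_le (hdN : d ≤ N) (P : Finset (Fin N × Fin N)) :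
    graphMeasure N d {g | ∀ p ∈ P, p.2 ∈ g p.1} ≤ ((d : ℝ≥0∞) / N) ^ #P := by
  classical
  have := isProbabilityMeasure_uniformFinset_powersetCard hdN
  let Q : Fin N → Finset (Fin N) := fun u => {w | (u, w) ∈ P}
  have hset : {g : Fin N → Finset (Fin N) | ∀ p ∈ P, p.2 ∈ g p.1} =
      Set.univ.pi fun u => {A | Q u ⊆ A} := by
    ext g
    simp [Q, Set.mem_pi, subset_iff]
  have hcard : ∑ u, #(Q u) = #P := by
    calc ∑ u, #(Q u) = ∑ u, ∑ w, if (u, w) ∈ P then 1 else 0 := by simp only [Q, card_filter]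
      _ = ∑ p : Fin N × Fin N, if p ∈ P then 1 else 0 := (Fintype.sum_prod_type' _).symm
      _ = #P := by simp
  calc graphMeasure N d {g | ∀ p ∈ P, p.2 ∈ g p.1}
      = ∏ u, uniformFinset (powersetCard d univ) {A | Q u ⊆ A} := by
        rw [hset, graphMeasure, Measure.pi_pi]
    _ ≤ ∏ u, ((d : ℝ≥0∞) / N) ^ #(Q u) :=
        prod_le_prod' fun u _ => uniformFinset_superset_le hdN (Q u)
    _ = ((d : ℝ≥0∞) / N) ^ #P := by rw [prod_pow_eq_pow_sum, hcard]

lemma graphMeasure_injective_edges_le (hdN : d ≤ N) {M : ℕ} (e : Fin M → Fin N × Fin N) :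
    graphMeasure N d {g | Function.Injective e ∧ ∀ j, (e j).2 ∈ g (e j).1} ≤
      ((d : ℝ≥0∞) / N) ^ M := by
  classical
  by_cases he : Function.Injective e
  · calc graphMeasure N d {g | Function.Injective e ∧ ∀ j, (e j).2 ∈ g (e j).1}
        ≤ graphMeasure N d {g | ∀ p ∈ univ.image e, p.2 ∈ g p.1} :=
          measure_mono fun g hg => by simpa using hg.2
      _ ≤ ((d : ℝ≥0∞) / N) ^ M := by
          simpa [card_image_of_injective _ he] using graphMeasure_edges_le hdN (univ.image e)
  · simp [he]

lemma graphMeasure_containsPattern_le (hdN : d ≤ N) (v : Fin N) {n : ℕ}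
    (src tgt : Fin (n + 1) → Fin (n + 1)) :
    graphMeasure N d {g | ContainsPattern (fun u w => w ∈ g u) v src tgt} ≤
      (d : ℝ≥0∞) ^ (n + 1) / N := by
  let edges : (Fin n → Fin N) → Fin (n + 1) → Fin N × Fin N := fun a j =>
    ((Fin.cons v a : Fin (n + 1) → Fin N) (src j), (Fin.cons v a : Fin (n + 1) → Fin N) (tgt j))
  have hN : (N : ℝ≥0∞) ≠ 0 := by exact_mod_cast v.pos.ne'
  calc graphMeasure N d {g | ContainsPattern (fun u w => w ∈ g u) v src tgt}
      ≤ graphMeasure N d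
          (⋃ a, {g | Function.Injective (edges a) ∧ ∀ j, (edges a j).2 ∈ g (edges a j).1}) := by
        refine measure_mono fun g ⟨x, hx₀, hinj, hE⟩ => Set.mem_iUnion.2 ⟨Fin.tail x, ?_⟩
        subst hx₀
        simpa only [edges, Fin.cons_self_tail, Set.mem_ofPred_eq] using And.intro hinj hE
    _ ≤ ∑ a : Fin n → Fin N, ((d : ℝ≥0∞) / N) ^ (n + 1) :=
        (measure_iUnion_fintype_le _ _).trans
          (sum_le_sum fun a _ => graphMeasure_injective_edges_le hdN (edges a))
    _ = (d : ℝ≥0∞) ^ (n + 1) / N := by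
        simp only [sum_const, card_univ, Fintype.card_fun, Fintype.card_fin, nsmul_eq_mul,
          Nat.cast_pow]
        rw [div_eq_mul_inv, mul_pow, ← ENNReal.inv_pow, ← div_eq_mul_inv, ← mul_div_assoc,
          pow_succ (N : ℝ≥0∞), ENNReal.mul_div_mul_left _ _ (pow_ne_zero n hN) (by simp)]

theorem graphMeasure_not_treeUpTo_le (hd : 1 ≤ d) (hdN : d ≤ N) (v : Fin N) (h : ℕ) :
    graphMeasure N d {g | ¬ TreeUpTo (fun u w => w ∈ g u) v h} ≤
      ((2 * h) ^ 3 * d ^ (2 * h) : ℕ) / N := by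
  let pattern : (n : Fin (2 * h)) → Fin (n + 1) → Fin (n + 1) → Set (Fin N → Finset (Fin N)) :=
    fun n k t => {g | ContainsPattern (fun u w => w ∈ g u) v (branchSrc k t) (branchTgt k)}
  have hpattern : ∀ n k t, graphMeasure N d (pattern n k t) ≤ (d : ℝ≥0∞) ^ (2 * h) / N :=
    fun n k t => (graphMeasure_containsPattern_le hdN v _ _).trans
      (by gcongr; exacts [by exact_mod_cast hd, n.isLt])
  calc graphMeasure N d {g | ¬ TreeUpTo (fun u w => w ∈ g u) v h}
      ≤ graphMeasure N d (⋃ (n) (k) (t), pattern n k t) := by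
        refine measure_mono fun g hg => ?_
        obtain ⟨n, hn, k, t, hk⟩ := exists_containsPattern_of_not_treeUpTo hg
        exact Set.mem_iUnion.2 ⟨⟨n, hn⟩, Set.mem_iUnion₂.2 ⟨k, t, hk⟩⟩
    _ ≤ ∑ n, ∑ k, ∑ t, graphMeasure N d (pattern n k t) :=
        (measure_iUnion_fintype_le _ _).trans (sum_le_sum fun n _ =>
          (measure_iUnion_fintype_le _ _).trans (sum_le_sum fun k _ =>
            measure_iUnion_fintype_le _ _))
    _ ≤ ∑ n : Fin (2 * h), ∑ _k : Fin (n + 1), ∑ _t : Fin (n + 1), (d : ℝ≥0∞) ^ (2 * h) / N :=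
        sum_le_sum fun n _ => sum_le_sum fun k _ => sum_le_sum fun t _ => hpattern n k t
    _ ≤ ∑ _n : Fin (2 * h),
          ((2 * h : ℕ) : ℝ≥0∞) * ((2 * h : ℕ) * ((d : ℝ≥0∞) ^ (2 * h) / N)) := by
        refine sum_le_sum fun n _ => ?_
        simp only [sum_const, card_univ, Fintype.card_fin, nsmul_eq_mul]
        gcongr <;> exact_mod_cast n.isLt
    _ = ((2 * h) ^ 3 * d ^ (2 * h) : ℕ) / N := by
        simp only [sum_const, card_univ, Fintype.card_fin, nsmul_eq_mul]
        push_cast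
        rw [← mul_div_assoc, ← mul_div_assoc, ← mul_div_assoc]
        congr 1
        ring

end GraphMeasure

lemma Real.tendsto_pow_div_of_tendsto_div_log {C : ℝ} (hC : 0 < C) {f : ℕ → ℕ}
    (hf : Tendsto (fun n : ℕ => (f n : ℝ) / Real.log n) atTop (𝓝 0)) :
    Tendsto (fun n : ℕ => C ^ f n / n) atTop (𝓝 0) := by
  have hlog : Tendsto (fun n : ℕ => Real.log n) atTop atTop :=
    Real.tendsto_log_atTop.comp tendsto_natCast_atTop_atTop
  have hexp : Tendsto
      (fun n : ℕ => Real.exp (Real.log n * ((f n : ℝ) / Real.log n * Real.log C - 1)))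
      atTop (𝓝 0) :=
    Real.tendsto_exp_atBot.comp <| hlog.atTop_mul_neg (by norm_num : (0 * Real.log C - 1 : ℝ) < 0)
      ((hf.mul_const _).sub_const 1)
  refine hexp.congr' ?_
  filter_upwards [eventually_gt_atTop 1] with n hn
  have hlogn : Real.log n ≠ 0 := (Real.log_pos (by exact_mod_cast hn)).ne'
  have : Real.log n * ((f n : ℝ) / Real.log n * Real.log C - 1) =
      f n * Real.log C - Real.log n := by
    field_simp
  rw [this, Real.exp_sub, Real.exp_nat_mul, Real.exp_log hC, Real.exp_log (by positivity)]

lemma ENNReal.tendsto_pow_div_of_tendsto_div_log {C : ℕ} (hC : 0 < C) {f : ℕ → ℕ}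
    (hf : Tendsto (fun n : ℕ => (f n : ℝ) / Real.log n) atTop (𝓝 0)) :
    Tendsto (fun n : ℕ => ((C ^ f n : ℕ) : ℝ≥0∞) / n) atTop (𝓝 0) := by
  have := ENNReal.tendsto_ofReal
    (Real.tendsto_pow_div_of_tendsto_div_log (C := C) (by exact_mod_cast hC) hf)
  rw [ENNReal.ofReal_zero] at this
  refine this.congr' ?_
  filter_upwards [eventually_gt_atTop 0] with n hn
  rw [ENNReal.ofReal_div_of_pos (by exact_mod_cast hn), ← Nat.cast_pow, ENNReal.ofReal_natCast,
    ENNReal.ofReal_natCast]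

lemma two_mul_pow_three_mul_pow_le (h d : ℕ) : (2 * h) ^ 3 * d ^ (2 * h) ≤ (64 * d ^ 2) ^ h := by
  have h₄ : 2 * h < 4 ^ h := by
    calc 2 * h < 2 ^ (2 * h) := Nat.lt_two_pow_self
      _ = 4 ^ h := by rw [pow_mul]; norm_num
  calc (2 * h) ^ 3 * d ^ (2 * h) ≤ (4 ^ h) ^ 3 * d ^ (2 * h) := by gcongr
    _ = (64 * d ^ 2) ^ h := by rw [mul_pow, ← pow_mul, mul_comm h 3, pow_mul, pow_mul d]; norm_num

/-- **local tree-likeness.** Fix `d ≥ 1` and a sequence `(h n)`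
with `h n / ln n → 0`. Sample the random graph of `G(n, d)` (node set
`Fin (n+1)`, so that the node `v = 0` exists) and fix `v = 0`. Then the
probability that the out-neighborhood of `v` up to distance `h n` is a tree
tends to `1` as the number of nodes tends to infinity. -/
theorem locally_tree_like (d : ℕ) (hd : 1 ≤ d) (h : ℕ → ℕ)
    (hh : Filter.Tendsto (fun n : ℕ => (h n : ℝ) / Real.log n)
      Filter.atTop (nhds 0)) :
    Filter.Tendsto
      (fun n : ℕ => graphMeasure (n + 1) d
        {g : Fin (n + 1) → Finset (Fin (n + 1)) |
          TreeUpTo (fun u w => w ∈ g u) 0 (h (n + 1))})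
      Filter.atTop (nhds 1) := by
  have hbad : Tendsto (fun n : ℕ => graphMeasure (n + 1) d
      {g | ¬ TreeUpTo (fun u w => w ∈ g u) 0 (h (n + 1))}) atTop (𝓝 0) := by
    refine tendsto_of_tendsto_of_tendsto_of_le_of_le' tendsto_const_nhds
      ((ENNReal.tendsto_pow_div_of_tendsto_div_log (C := 64 * d ^ 2) (by positivity) hh).comp
        (tendsto_add_atTop_nat 1)) (.of_forall fun _ => zero_le) ?_
    filter_upwards [eventually_ge_atTop d] with n hn
    refine (graphMeasure_not_treeUpTo_le hd (by omega) 0 _).trans ?_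
    exact ENNReal.div_le_div_right (by exact_mod_cast two_mul_pow_three_mul_pow_le _ _) _
  have hcompl : ∀ᶠ n in atTop, 1 - graphMeasure (n + 1) d
      {g | ¬ TreeUpTo (fun u w => w ∈ g u) 0 (h (n + 1))} =
      graphMeasure (n + 1) d {g | TreeUpTo (fun u w => w ∈ g u) 0 (h (n + 1))} :=
    (eventually_ge_atTop d).mono fun n hn => (graphMeasure_setOf_eq_one_sub (by omega) _).symm
  simpa using (ENNReal.Tendsto.sub tendsto_const_nhds hbad (.inl ENNReal.one_ne_top)).congr' hcompl
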